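/- (Normal traction vanishes on the free surfaces, Eqs. 2.3–2.5) Let h > 0 and let λ, μ, ρ, ω, k, p, q be real numbers with k ≠ 0, q ≠ 0, (λ+2μ)·(k²+p²) = ρω² and μ·(k²+q²) = ρω². Set s₁ = 2cos(qh), s₂ = −((k²−q²)/k²)·cos(ph), s₃ = −(2p/k)·cos(qh), s₄ = −((k²−q²)/(qk))·cos(ph), and define V(z) = s₁cos(pz) + s₂cos(qz), W(z) = s₃sin(pz) + s₄sin(qz), u_x(x,z) = i·V(z)·e^{ikx}, u_z(x,z) = W(z)·e^{ikx}. Then the normal stress σ_zz = λ·(∂u_x/∂x + ∂u_z/∂z) + 2μ·∂u_z/∂z vanishes identically on both surfaces: σ_zz(x, h) = 0 and σ_zz(x, −h) = 0 for every x ∈ ℝ. -/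

import Mathlib

open Real Complex

/-! At a height `z`, both displacement components carry the common factor `e^{ikx}`, and
`σ_zz(x, z) = ((λ + 2μ) W'(z) - λ k V(z)) e^{ikx}`. On `z = ±h` the cosines in `V` and `W'` take
the values `cos(ph)`, `cos(qh)` (cosine is even), and the bracket collapses to
`2 cos(ph) cos(qh) (μ(k² + q²) - (λ + 2μ)(k² + p²)) / k`, which vanishes because both dispersion
relations equal `ρω²`. -/

lemma hasDerivAt_mul_cexp_I_mul (c : ℂ) (k x : ℝ) :
    HasDerivAt (fun x' : ℝ => c * Complex.exp (Complex.I * k * x'))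
      (c * (Complex.I * k * Complex.exp (Complex.I * k * x))) x := by
  have hlin : HasDerivAt (fun x' : ℝ => Complex.I * k * (x' : ℂ)) (Complex.I * k) x := by
    simpa using (Complex.ofRealCLM.hasDerivAt (x := x)).const_mul (Complex.I * (k : ℂ))
  simpa [mul_comm] using hlin.cexp.const_mul c

lemma hasDerivAt_sin_mul_add_sin_mul (a b p q z : ℝ) :
    HasDerivAt (fun z => a * Real.sin (p * z) + b * Real.sin (q * z))
      (a * p * Real.cos (p * z) + b * q * Real.cos (q * z)) z := by
  have hsin (r : ℝ) : HasDerivAt (fun z => Real.sin (r * z)) (Real.cos (r * z) * r) z := by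
    simpa using ((hasDerivAt_id z).const_mul r).sin
  exact (((hsin p).const_mul a).add ((hsin q).const_mul b)).congr_deriv (by ring)

lemma symmetric_lamb_stress_amplitude_eq_zero {lam μ k p q : ℝ} (hk : k ≠ 0) (hq : q ≠ 0)
    (hdisp : (lam + 2 * μ) * (k ^ 2 + p ^ 2) = μ * (k ^ 2 + q ^ 2)) (cp cq : ℝ) :
    (lam + 2 * μ) * (-(2 * p / k) * cq * p * cp + -((k ^ 2 - q ^ 2) / (q * k)) * cp * q * cq)
      - lam * k * (2 * cq * cp + -((k ^ 2 - q ^ 2) / k ^ 2) * cp * cq) = 0 := by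
  field_simp
  linear_combination (-2 * cp * cq) * hdisp

theorem lamb_normal_traction_free_general (h : ℝ) (lam μ ρ ω k p q : ℝ)
    (hk : k ≠ 0) (hq : q ≠ 0)
    (hP : (lam + 2 * μ) * (k ^ 2 + p ^ 2) = ρ * ω ^ 2)
    (hS : μ * (k ^ 2 + q ^ 2) = ρ * ω ^ 2) :
    (let s₁ : ℝ := 2 * Real.cos (q * h);
     let s₂ : ℝ := -((k ^ 2 - q ^ 2) / k ^ 2) * Real.cos (p * h);
     let s₃ : ℝ := -(2 * p / k) * Real.cos (q * h);
     let s₄ : ℝ := -((k ^ 2 - q ^ 2) / (q * k)) * Real.cos (p * h);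
     let V : ℝ → ℝ := fun z => s₁ * Real.cos (p * z) + s₂ * Real.cos (q * z);
     let W : ℝ → ℝ := fun z => s₃ * Real.sin (p * z) + s₄ * Real.sin (q * z);
     let ux : ℝ → ℝ → ℂ := fun x z =>
        Complex.I * (V z : ℂ) * Complex.exp (Complex.I * k * x);
     let uz : ℝ → ℝ → ℂ := fun x z =>
        (W z : ℂ) * Complex.exp (Complex.I * k * x);
     let σzz : ℝ → ℝ → ℂ := fun x z =>
        (lam : ℂ) * (deriv (fun x' => ux x' z) x + deriv (fun z' => uz x z') z)
          + 2 * (μ : ℂ) * deriv (fun z' => uz x z') z;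
     ∀ x : ℝ, σzz x h = 0 ∧ σzz x (-h) = 0) := by
  intro s₁ s₂ s₃ s₄ V W ux uz σzz x
  set E := Complex.exp (Complex.I * k * x)
  have hσ (z : ℝ) : σzz x z = (((lam + 2 * μ) * (s₃ * p * Real.cos (p * z)
      + s₄ * q * Real.cos (q * z)) - lam * k * V z : ℝ) : ℂ) * E := by
    have hdx : deriv (fun x' => ux x' z) x = Complex.I * V z * (Complex.I * k * E) :=
      (hasDerivAt_mul_cexp_I_mul (Complex.I * (V z : ℂ)) k x).deriv
    have hdz : deriv (fun z' => uz x z') z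
        = ((s₃ * p * Real.cos (p * z) + s₄ * q * Real.cos (q * z) : ℝ) : ℂ) * E :=
      ((hasDerivAt_sin_mul_add_sin_mul s₃ s₄ p q z).ofReal_comp.mul_const E).deriv
    simp only [σzz, hdx, hdz]
    push_cast
    linear_combination (lam * V z * k * E) * Complex.I_mul_I
  have hamp := symmetric_lamb_stress_amplitude_eq_zero hk hq (hP.trans hS.symm)
    (Real.cos (p * h)) (Real.cos (q * h))
  refine ⟨?_, ?_⟩
  · rw [hσ]
    simp only [V, s₁, s₂, s₃, s₄, hamp, Complex.ofReal_zero, zero_mul]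
  · rw [hσ]
    simp only [V, s₁, s₂, s₃, s₄, mul_neg, Real.cos_neg, hamp, Complex.ofReal_zero, zero_mul]

/-- For the symmetric Lamb mode profiles (Eqs. 2.3–2.5), the normal stress
`σ_zz = λ(∂u_x/∂x + ∂u_z/∂z) + 2μ·∂u_z/∂z` vanishes on both free surfaces `z = ±h`. -/
theorem lamb_normal_traction_free (h : ℝ) (hh : 0 < h) (lam μ ρ ω k p q : ℝ)
    (hk : k ≠ 0) (hq : q ≠ 0)
    (hP : (lam + 2 * μ) * (k ^ 2 + p ^ 2) = ρ * ω ^ 2)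
    (hS : μ * (k ^ 2 + q ^ 2) = ρ * ω ^ 2) :
    (let s₁ : ℝ := 2 * Real.cos (q * h);
     let s₂ : ℝ := -((k ^ 2 - q ^ 2) / k ^ 2) * Real.cos (p * h);
     let s₃ : ℝ := -(2 * p / k) * Real.cos (q * h);
     let s₄ : ℝ := -((k ^ 2 - q ^ 2) / (q * k)) * Real.cos (p * h);
     let V : ℝ → ℝ := fun z => s₁ * Real.cos (p * z) + s₂ * Real.cos (q * z);
     let W : ℝ → ℝ := fun z => s₃ * Real.sin (p * z) + s₄ * Real.sin (q * z);
     let ux : ℝ → ℝ → ℂ := fun x z =>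
        Complex.I * (V z : ℂ) * Complex.exp (Complex.I * k * x);
     let uz : ℝ → ℝ → ℂ := fun x z =>
        (W z : ℂ) * Complex.exp (Complex.I * k * x);
     let σzz : ℝ → ℝ → ℂ := fun x z =>
        (lam : ℂ) * (deriv (fun x' => ux x' z) x + deriv (fun z' => uz x z') z)
          + 2 * (μ : ℂ) * deriv (fun z' => uz x z') z;
     ∀ x : ℝ, σzz x h = 0 ∧ σzz x (-h) = 0) :=
  lamb_normal_traction_free_general h lam μ ρ ω k p q hk hq hP hS
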